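/- arXiv:2110.08210 — 7 statements merged into one kernel-verified Lean document; each statement's English description precedes it below -/
import Mathlib

section
/- For every integer n ≥ 3, there is no group isomorphism between the unitary group U(n,ℂ) and the general linear group GL(n,ℂ), i.e. U(n,ℂ) and GL(n,ℂ) are not isomorphic as abstract groups. -/
/-!
An element `u` of `U(n,ℂ)` that is conjugate to `u²` has finite order: its spectrum is a finite
set of nonzero numbers stable under squaring, hence consists of roots of unity, so some power
`u ^ N` is a normal matrix with spectrum `{1}` and therefore equals `1`. In `GL(n,ℂ)`, `n ≥ 2`,
the transvection `1 + E₀₁` has infinite order and is conjugate to its square `1 + 2 E₀₁` by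
`diag(2, 1, …, 1)`. Both properties are invariant under group isomorphisms.
-/

open scoped Matrix.Norms.L2Operator

section FiniteSqStable

variable {M : Type*} [MonoidWithZero M] [IsLeftCancelMulZero M] {S : Set M}

theorem isOfFinOrder_of_finite_of_sq_mem (hS : S.Finite) (h0 : 0 ∉ S)
    (hsq : ∀ z ∈ S, z ^ 2 ∈ S) {z : M} (hz : z ∈ S) : IsOfFinOrder z := by
  have hpow : ∀ k : ℕ, z ^ 2 ^ k ∈ S := by
    intro k
    induction k with
    | zero => simpa using hz
    | succ k ih => simpa [pow_succ, pow_mul] using hsq _ ih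
  obtain ⟨a, b, hab, heq⟩ := hS.exists_lt_map_eq_of_forall_mem hpow
  have hle : 2 ^ a ≤ 2 ^ b := Nat.pow_le_pow_right two_pos hab.le
  refine isOfFinOrder_iff_pow_eq_one.mpr
    ⟨2 ^ b - 2 ^ a, Nat.sub_pos_of_lt (Nat.pow_lt_pow_right one_lt_two hab), ?_⟩
  have hne : z ^ 2 ^ a ≠ 0 := fun h => h0 (h ▸ hpow a)
  refine mul_left_cancel₀ hne ?_
  rw [← pow_add, Nat.add_sub_cancel' hle, mul_one]
  exact heq.symm

theorem exists_pow_eq_one_of_finite_of_sq_mem (hS : S.Finite) (h0 : 0 ∉ S)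
    (hsq : ∀ z ∈ S, z ^ 2 ∈ S) : ∃ N, 0 < N ∧ ∀ z ∈ S, z ^ N = 1 := by
  classical
  refine ⟨∏ z ∈ hS.toFinset, orderOf z, ?_, fun z hz => ?_⟩
  · exact Finset.prod_pos fun z hz =>
      (isOfFinOrder_of_finite_of_sq_mem hS h0 hsq (hS.mem_toFinset.mp hz)).orderOf_pos
  · exact orderOf_dvd_iff_pow_eq_one.mp (Finset.dvd_prod_of_mem _ (hS.mem_toFinset.mpr hz))

end FiniteSqStable

theorem Unitary.isOfFinOrder_of_isConj_sq {A : Type*} [CStarAlgebra A] {u : unitary A}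
    (hfin : (spectrum ℂ (u : A)).Finite) (hconj : IsConj u (u ^ 2)) : IsOfFinOrder u := by
  have hspec_sq : spectrum ℂ ((u : A) ^ 2) = spectrum ℂ (u : A) := by
    obtain ⟨c, hc⟩ := isConj_iff.mp hconj
    rw [← SubmonoidClass.coe_pow, ← hc, ← Unitary.star_eq_inv]
    exact Unitary.spectrum_star_right_conjugate
  obtain ⟨N, hN, hroots⟩ := exists_pow_eq_one_of_finite_of_sq_mem hfin
    (spectrum.zero_notMem ℂ Unitary.isUnit_coe)
    (fun z hz => hspec_sq ▸ spectrum.pow_mem_pow _ 2 hz)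
  refine isOfFinOrder_iff_pow_eq_one.mpr ⟨N, hN, Subtype.ext ?_⟩
  refine CFC.eq_one_of_spectrum_subset_one (R := ℂ) _ ?_
  rw [SubmonoidClass.coe_pow, spectrum.map_pow_of_pos _ hN]
  rintro _ ⟨z, hz, rfl⟩
  exact hroots z hz

namespace Matrix

theorem unitaryGroup.isOfFinOrder_of_isConj_sq {n : Type*} [Fintype n] [DecidableEq n]
    {u : unitaryGroup n ℂ} (h : IsConj u (u ^ 2)) : IsOfFinOrder u :=
  Unitary.isOfFinOrder_of_isConj_sq (Matrix.finite_spectrum _) h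

variable {n R : Type*} [DecidableEq n] [CommRing R] {i j : n}

theorem transvection_apply_of_ne (h : i ≠ j) (c : R) : transvection i j c i j = c := by
  simp [transvection, h]

variable [Fintype n]

theorem transvection_pow (h : i ≠ j) (c : R) (k : ℕ) :
    transvection i j c ^ k = transvection i j (k * c) := by
  induction k with
  | zero => simp
  | succ k ih =>
    rw [pow_succ, ih, transvection_mul_transvection_same _ _ h]
    push_cast
    ring_nf

theorem not_isOfFinOrder_transvection [NoZeroDivisors R] [CharZero R] (h : i ≠ j) {c : R}
    (hc : c ≠ 0) : ¬IsOfFinOrder (transvection i j c) := by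
  rintro ⟨k, hk, hpow⟩
  have := congrFun₂ ((isPeriodicPt_mul_iff_pow_eq_one (transvection i j c)).mp hpow) i j
  rw [transvection_pow h, transvection_apply_of_ne h, one_apply_ne h, mul_eq_zero,
    Nat.cast_eq_zero] at this
  exact this.elim hk.ne' hc

theorem diagonal_mul_transvection (d : n → R) (c : R) :
    diagonal d * transvection i j (c * d j) = transvection i j (d i * c) * diagonal d := by
  simp only [transvection, Matrix.mul_add, Matrix.add_mul, mul_one, one_mul, add_right_inj]
  ext a b
  simp only [diagonal_mul, mul_diagonal, single_apply]
  split_ifs with h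
  · obtain ⟨rfl, rfl⟩ := h
    ring
  · simp

theorem GeneralLinearGroup.exists_isConj_sq_not_isOfFinOrder (n K : Type*) [Fintype n]
    [DecidableEq n] [Nontrivial n] [Field K] [CharZero K] :
    ∃ g : GL n K, IsConj g (g ^ 2) ∧ ¬IsOfFinOrder g := by
  obtain ⟨i, j, hij⟩ := exists_pair_ne n
  have hT : IsUnit (transvection i j (1 : K)) := by
    rw [isUnit_iff_isUnit_det, det_transvection_of_ne _ _ hij]
    exact isUnit_one
  set d : n → K := Function.update 1 i 2
  have hdi : d i = 2 := Function.update_self ..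
  have hdj : d j = 1 := Function.update_of_ne hij.symm ..
  have hD : IsUnit (diagonal d) := isUnit_diagonal.mpr <| Pi.isUnit_iff.mpr fun a => by
    rcases eq_or_ne a i with rfl | ha <;> simp [d, *]
  refine ⟨hT.unit, ⟨toUnits hD.unit, Units.ext ?_⟩, ?_⟩
  · show diagonal d * transvection i j 1 = transvection i j 1 ^ 2 * diagonal d
    simpa [hdi, hdj, transvection_pow hij] using
      diagonal_mul_transvection (i := i) (j := j) d (1 : K)
  · rw [← Units.isOfFinOrder_val]
    exact not_isOfFinOrder_transvection hij one_ne_zero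

end Matrix

/-- For every integer `n ≥ 3`, the unitary group `U(n,ℂ)` and the general linear
group `GL(n,ℂ)` are not isomorphic as abstract groups. -/
theorem unitary_not_iso_GL_as_groups (n : ℕ) (hn : 3 ≤ n) :
    IsEmpty (Matrix.unitaryGroup (Fin n) ℂ ≃* GL (Fin n) ℂ) := by
  have : Nontrivial (Fin n) := Fin.nontrivial_iff_two_le.mpr (by omega)
  obtain ⟨g, hconj, hinf⟩ :=
    Matrix.GeneralLinearGroup.exists_isConj_sq_not_isOfFinOrder (Fin n) ℂ
  refine ⟨fun e => hinf ?_⟩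
  have hconj' : IsConj (e.symm g) (e.symm g ^ 2) := by
    simpa using e.symm.toMonoidHom.map_isConj hconj
  simpa using e.toMonoidHom.isOfFinOrder (Matrix.unitaryGroup.isOfFinOrder_of_isConj_sq hconj')
end

section
/- Let n ≥ 1 and let P be a polynomial with complex coefficients in the n² entries of a generic n×n complex matrix (an element of MvPolynomial (Fin n × Fin n) ℂ). If P evaluates to 0 at every unitary matrix U ∈ U(n,ℂ), then P = 0. (Equivalently, U(n,ℂ) is Zariski-dense in the space of all n×n complex matrices.) -/
open Matrix MvPolynomial
open scoped ComplexOrder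

noncomputable section
namespace UZD

lemma star_dot {k : Type*} [Fintype k] (a b : k → ℂ) :
    star (a ⬝ᵥ b) = star a ⬝ᵥ star b := by
  simp [dotProduct, star_sum, mul_comm]

lemma eval_map_ofReal {σ : Type*} (x : σ → ℝ) (p : MvPolynomial σ ℝ) :
    MvPolynomial.eval (fun i => (x i : ℂ)) (MvPolynomial.map (algebraMap ℝ ℂ) p)
      = ((MvPolynomial.eval x p : ℝ) : ℂ) := by
  induction p using MvPolynomial.induction_on with
  | C a => simp
  | add p q hp hq => simp [hp, hq]
  | mul_X p i hp => simp [hp]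

lemma real_points {σ : Type*} (Q : MvPolynomial σ ℂ)
    (h0 : ∀ x : σ → ℝ, MvPolynomial.eval (fun i => (x i : ℂ)) Q = 0) : Q = 0 := by
  classical
  set A : MvPolynomial σ ℝ := ∑ m ∈ Q.support, monomial m ((Q.coeff m).re) with hAdef
  set B : MvPolynomial σ ℝ := ∑ m ∈ Q.support, monomial m ((Q.coeff m).im) with hBdef
  have hA : ∀ m, A.coeff m = (Q.coeff m).re := by
    intro m
    rw [hAdef, MvPolynomial.coeff_sum]
    simp only [coeff_monomial]
    rw [Finset.sum_ite_eq' Q.support m]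
    by_cases hm : m ∈ Q.support
    · simp [hm]
    · simp [hm, MvPolynomial.notMem_support_iff.mp hm]
  have hB : ∀ m, B.coeff m = (Q.coeff m).im := by
    intro m
    rw [hBdef, MvPolynomial.coeff_sum]
    simp only [coeff_monomial]
    rw [Finset.sum_ite_eq' Q.support m]
    by_cases hm : m ∈ Q.support
    · simp [hm]
    · simp [hm, MvPolynomial.notMem_support_iff.mp hm]
  have hQ : Q = MvPolynomial.map (algebraMap ℝ ℂ) A
      + MvPolynomial.C Complex.I * MvPolynomial.map (algebraMap ℝ ℂ) B := by
    ext m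
    rw [MvPolynomial.coeff_add, MvPolynomial.coeff_map, MvPolynomial.coeff_C_mul,
      MvPolynomial.coeff_map, hA, hB]
    simp only [Complex.coe_algebraMap]
    rw [mul_comm]
    exact (Complex.re_add_im _).symm
  have hAB : ∀ x : σ → ℝ, ((MvPolynomial.eval x A : ℝ) : ℂ)
      + Complex.I * ((MvPolynomial.eval x B : ℝ) : ℂ) = 0 := by
    intro x
    have := h0 x
    rw [hQ] at this
    rw [map_add, _root_.map_mul, MvPolynomial.eval_C, eval_map_ofReal, eval_map_ofReal] at this
    exact this
  have hA0 : A = 0 := by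
    apply MvPolynomial.funext
    intro x
    have := congrArg Complex.re (hAB x)
    simpa using this
  have hB0 : B = 0 := by
    apply MvPolynomial.funext
    intro x
    have := congrArg Complex.im (hAB x)
    simpa using this
  rw [hQ, hA0, hB0]
  simp

variable {n : ℕ}

lemma det_ne (H : Matrix (Fin n) (Fin n) ℂ) (hH : Hᴴ = H) :
    ((1 : Matrix (Fin n) (Fin n) ℂ) - Complex.I • H).det ≠ 0 := by
  intro h0
  obtain ⟨v, hv, hMv⟩ := Matrix.exists_mulVec_eq_zero_iff.mpr h0
  rw [Matrix.sub_mulVec, Matrix.one_mulVec, Matrix.smul_mulVec] at hMv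
  have hv' : v = Complex.I • (H *ᵥ v) := sub_eq_zero.mp hMv
  have hcw0 : star v ⬝ᵥ v = Complex.I * (star v ⬝ᵥ (H *ᵥ v)) := by
    nth_rewrite 2 [hv']
    rw [dotProduct_smul]
    simp [smul_eq_mul]
  set c := star v ⬝ᵥ v with hc
  set w := star v ⬝ᵥ (H *ᵥ v) with hw
  have hcw : c = Complex.I * w := hcw0
  have hwreal : star w = w := by
    rw [hw, star_dot, star_star, Matrix.star_mulVec, hH, dotProduct_comm,
      ← Matrix.dotProduct_mulVec]
  have hcreal : star c = c := by
    rw [hc, star_dot, star_star, dotProduct_comm]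
  have h2 : c = -(Complex.I * w) := by
    calc c = star c := hcreal.symm
    _ = star (Complex.I * w) := by rw [hcw]
    _ = star w * star Complex.I := star_mul _ _
    _ = -(Complex.I * w) := by
        rw [hwreal, Complex.star_def, Complex.conj_I]; ring
  have c0 : c = 0 := by linear_combination (hcw + h2) / 2
  exact hv (dotProduct_star_self_eq_zero.mp (by rw [← hc]; exact c0))

lemma det_ne' (H : Matrix (Fin n) (Fin n) ℂ) (hH : Hᴴ = H) :
    ((1 : Matrix (Fin n) (Fin n) ℂ) + Complex.I • H).det ≠ 0 := by
  have := det_ne (-H) (by rw [conjTranspose_neg, hH])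
  simpa [smul_neg, sub_neg_eq_add] using this

lemma cayley_mem (H : Matrix (Fin n) (Fin n) ℂ) (hH : Hᴴ = H) :
    (1 + Complex.I • H) * (1 - Complex.I • H)⁻¹ ∈ Matrix.unitaryGroup (Fin n) ℂ := by
  set S := Complex.I • H with hS
  have hM : IsUnit (1 - S).det := isUnit_iff_ne_zero.mpr (det_ne H hH)
  have hN : IsUnit (1 + S).det := isUnit_iff_ne_zero.mpr (det_ne' H hH)
  have hcomm : (1 - S) * (1 + S) = (1 + S) * (1 - S) := by noncomm_ring
  have h1 : (1 - S)ᴴ = 1 + S := by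
    rw [conjTranspose_sub, conjTranspose_one, hS, conjTranspose_smul, hH,
      Complex.star_def, Complex.conj_I, neg_smul, sub_neg_eq_add]
  have h2 : (1 + S)ᴴ = 1 - S := by
    rw [conjTranspose_add, conjTranspose_one, hS, conjTranspose_smul, hH,
      Complex.star_def, Complex.conj_I, neg_smul, ← sub_eq_add_neg]
  have hstar : star ((1 + S) * (1 - S)⁻¹) = (1 + S)⁻¹ * (1 - S) := by
    show ((1 + S) * (1 - S)⁻¹)ᴴ = _
    rw [conjTranspose_mul, Matrix.conjTranspose_nonsing_inv, h1, h2]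
  rw [Matrix.mem_unitaryGroup_iff, hstar]
  have key : (1 - S)⁻¹ * (1 + S)⁻¹ = (1 + S)⁻¹ * (1 - S)⁻¹ := by
    rw [← Matrix.mul_inv_rev, ← Matrix.mul_inv_rev, hcomm]
  calc (1 + S) * (1 - S)⁻¹ * ((1 + S)⁻¹ * (1 - S))
      = (1 + S) * ((1 - S)⁻¹ * (1 + S)⁻¹) * (1 - S) := by
        simp only [mul_assoc]
    _ = (1 + S) * ((1 + S)⁻¹ * (1 - S)⁻¹) * (1 - S) := by rw [key]
    _ = ((1 + S) * (1 + S)⁻¹) * ((1 - S)⁻¹ * (1 - S)) := by simp only [mul_assoc]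
    _ = 1 := by rw [Matrix.mul_nonsing_inv _ hN, Matrix.nonsing_inv_mul _ hM, one_mul]

def Hm (z : Fin n × Fin n → ℂ) : Matrix (Fin n) (Fin n) ℂ :=
  Matrix.of fun a b => (z (a, b) + z (b, a)) + Complex.I * (z (a, b) - z (b, a))

def Dm (z : Fin n × Fin n → ℂ) : ℂ := ((1 : Matrix (Fin n) (Fin n) ℂ) - Complex.I • Hm z).det

def Bm (z : Fin n × Fin n → ℂ) : Matrix (Fin n) (Fin n) ℂ :=
  ((1 : Matrix (Fin n) (Fin n) ℂ) + Complex.I • Hm z) * (1 - Complex.I • Hm z).adjugate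

def Um (z : Fin n × Fin n → ℂ) : Matrix (Fin n) (Fin n) ℂ :=
  ((1 : Matrix (Fin n) (Fin n) ℂ) + Complex.I • Hm z) * (1 - Complex.I • Hm z)⁻¹

def Hp (n : ℕ) : Matrix (Fin n) (Fin n) (MvPolynomial (Fin n × Fin n) ℂ) :=
  Matrix.of fun a b => (X (a, b) + X (b, a)) + C Complex.I * (X (a, b) - X (b, a))

def Dp (n : ℕ) : MvPolynomial (Fin n × Fin n) ℂ :=
  ((1 : Matrix (Fin n) (Fin n) (MvPolynomial (Fin n × Fin n) ℂ))
    - (C Complex.I : MvPolynomial (Fin n × Fin n) ℂ) • Hp n).det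

def Bp (n : ℕ) : Matrix (Fin n) (Fin n) (MvPolynomial (Fin n × Fin n) ℂ) :=
  ((1 : Matrix (Fin n) (Fin n) (MvPolynomial (Fin n × Fin n) ℂ))
    + (C Complex.I : MvPolynomial (Fin n × Fin n) ℂ) • Hp n) *
    (1 - (C Complex.I : MvPolynomial (Fin n × Fin n) ℂ) • Hp n).adjugate

lemma mapM (z : Fin n × Fin n → ℂ) :
    ((1 : Matrix (Fin n) (Fin n) (MvPolynomial (Fin n × Fin n) ℂ))
      - (C Complex.I : MvPolynomial (Fin n × Fin n) ℂ) • Hp n).map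
      (MvPolynomial.eval z) = 1 - Complex.I • Hm z := by
  ext i j
  by_cases hij : i = j <;>
    simp [Hp, Hm, Matrix.map_apply, Matrix.sub_apply, Matrix.smul_apply, Matrix.one_apply,
      hij, smul_eq_mul]

lemma mapN (z : Fin n × Fin n → ℂ) :
    ((1 : Matrix (Fin n) (Fin n) (MvPolynomial (Fin n × Fin n) ℂ))
      + (C Complex.I : MvPolynomial (Fin n × Fin n) ℂ) • Hp n).map
      (MvPolynomial.eval z) = 1 + Complex.I • Hm z := by
  ext i j
  by_cases hij : i = j <;>
    simp [Hp, Hm, Matrix.map_apply, Matrix.add_apply, Matrix.smul_apply, Matrix.one_apply,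
      hij, smul_eq_mul]

lemma eval_Dp (z : Fin n × Fin n → ℂ) : MvPolynomial.eval z (Dp n) = Dm z := by
  rw [Dp, Dm, RingHom.map_det, RingHom.mapMatrix_apply, mapM]

lemma eval_Bp (z : Fin n × Fin n → ℂ) (i j : Fin n) :
    MvPolynomial.eval z (Bp n i j) = Bm z i j := by
  have hmap : (MvPolynomial.eval z).mapMatrix (Bp n) = Bm z := by
    rw [Bp, _root_.map_mul, RingHom.map_adjugate, RingHom.mapMatrix_apply,
      RingHom.mapMatrix_apply, mapM, mapN, Bm]
  rw [show Bm z = (MvPolynomial.eval z).mapMatrix (Bp n) from hmap.symm]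
  rfl

end UZD
end

/-- Zariski density of `U(n,ℂ)` in the space of all `n × n` complex matrices:
if a polynomial `P` in the `n²` entries of a generic `n × n` complex matrix
vanishes at every unitary matrix, then `P = 0`. -/
theorem unitaryGroup_zariskiDense (n : ℕ) (hn : 1 ≤ n)
    (P : MvPolynomial (Fin n × Fin n) ℂ)
    (h : ∀ U : Matrix (Fin n) (Fin n) ℂ, U ∈ Matrix.unitaryGroup (Fin n) ℂ →
      MvPolynomial.eval (fun p => U p.1 p.2) P = 0) :
    P = 0 := by
  classical
  set N := P.totalDegree with hNdef
  set Q : MvPolynomial (Fin n × Fin n) ℂ :=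
    ∑ m ∈ P.support, MvPolynomial.C (P.coeff m) * UZD.Dp n ^ (N - m.sum fun _ e => e) *
      ∏ i ∈ m.support, UZD.Bp n i.1 i.2 ^ m i with hQdef
  have hevalQ : ∀ z : Fin n × Fin n → ℂ, MvPolynomial.eval z Q =
      ∑ m ∈ P.support, P.coeff m * UZD.Dm z ^ (N - m.sum fun _ e => e) *
        ∏ i ∈ m.support, UZD.Bm z i.1 i.2 ^ m i := by
    intro z
    rw [hQdef]
    simp only [map_sum, _root_.map_mul, map_pow, MvPolynomial.eval_C, UZD.eval_Dp,
      map_prod, UZD.eval_Bp]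
  have hQU : ∀ z : Fin n × Fin n → ℂ, UZD.Dm z ≠ 0 →
      MvPolynomial.eval z Q
        = UZD.Dm z ^ N * MvPolynomial.eval (fun p => UZD.Um z p.1 p.2) P := by
    intro z hd
    rw [hevalQ, MvPolynomial.eval_eq, Finset.mul_sum]
    refine Finset.sum_congr rfl fun m hm => ?_
    have hk : (m.sum fun _ e => e) ≤ N := MvPolynomial.le_totalDegree hm
    have hU : ∀ i j, UZD.Um z i j = (UZD.Dm z)⁻¹ * UZD.Bm z i j := by
      intro i j
      have hUm : UZD.Um z = (UZD.Dm z)⁻¹ • UZD.Bm z := by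
        simp only [UZD.Um, UZD.Bm, UZD.Dm]
        rw [Matrix.inv_def, Ring.inverse_eq_inv, Matrix.mul_smul]
      rw [hUm, Matrix.smul_apply, smul_eq_mul]
    simp only [hU, mul_pow]
    rw [Finset.prod_mul_distrib, Finset.prod_pow_eq_pow_sum]
    have hsum : ∑ i ∈ m.support, m i = m.sum fun _ e => e := rfl
    rw [hsum, inv_pow, pow_sub₀ _ hd hk]
    ring
  have hQ0 : Q = 0 := by
    apply UZD.real_points
    intro x
    have hH : (UZD.Hm fun i => (x i : ℂ))ᴴ = UZD.Hm fun i => (x i : ℂ) := by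
      ext a b
      simp only [UZD.Hm, conjTranspose_apply, Matrix.of_apply, Complex.star_def, map_add,
        map_sub, _root_.map_mul, Complex.conj_ofReal, Complex.conj_I]
      ring
    have hd : UZD.Dm (fun i => (x i : ℂ)) ≠ 0 := UZD.det_ne _ hH
    rw [hQU _ hd, h (UZD.Um _) (UZD.cayley_mem _ hH), mul_zero]
  have hP1 : ∀ A : Matrix (Fin n) (Fin n) ℂ, ((1 + A) : Matrix (Fin n) (Fin n) ℂ).det ≠ 0 →
      MvPolynomial.eval (fun p => A p.1 p.2) P = 0 := by
    intro A hdetA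
    set A1 : Matrix (Fin n) (Fin n) ℂ := 1 + A with hA1
    have hA1u : IsUnit A1.det := isUnit_iff_ne_zero.mpr hdetA
    set S : Matrix (Fin n) (Fin n) ℂ := A1⁻¹ * (A - 1) with hSdef
    set T : Matrix (Fin n) (Fin n) ℂ := (-Complex.I) • S with hTdef
    set z : Fin n × Fin n → ℂ :=
      fun p => ((1 - Complex.I) * T p.1 p.2 + (1 + Complex.I) * T p.2 p.1) / 4 with hzdef
    have hHmz : UZD.Hm z = T := by
      ext a b
      show (z (a, b) + z (b, a)) + Complex.I * (z (a, b) - z (b, a)) = T a b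
      rw [hzdef]
      simp only
      field_simp
      linear_combination (2 * T b a - 2 * T a b) * Complex.I_sq
    have hIT : Complex.I • T = S := by
      rw [hTdef, smul_smul, mul_neg, Complex.I_mul_I, neg_neg, one_smul]
    have h2mat : A1 - (A - 1) = (2 : ℂ) • (1 : Matrix (Fin n) (Fin n) ℂ) := by
      rw [hA1, two_smul]
      abel
    have h1S : (1 : Matrix (Fin n) (Fin n) ℂ) - S = A1⁻¹ * ((2 : ℂ) • 1) := by
      calc (1 : Matrix (Fin n) (Fin n) ℂ) - S = A1⁻¹ * A1 - A1⁻¹ * (A - 1) := by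
            rw [Matrix.nonsing_inv_mul _ hA1u, hSdef]
        _ = A1⁻¹ * (A1 - (A - 1)) := (mul_sub _ _ _).symm
        _ = A1⁻¹ * ((2 : ℂ) • 1) := by rw [h2mat]
    have hright : ((1 : Matrix (Fin n) (Fin n) ℂ) - S) * ((2 : ℂ)⁻¹ • A1) = 1 := by
      rw [h1S, mul_assoc, Matrix.smul_mul, one_mul, smul_smul,
        mul_inv_cancel₀ (two_ne_zero), one_smul, Matrix.nonsing_inv_mul _ hA1u]
    have hdS : ((1 : Matrix (Fin n) (Fin n) ℂ) - S).det ≠ 0 :=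
      Matrix.det_ne_zero_of_right_inverse hright
    have hdSu : IsUnit ((1 : Matrix (Fin n) (Fin n) ℂ) - S).det := isUnit_iff_ne_zero.mpr hdS
    have hdmz : UZD.Dm z ≠ 0 := by
      show ((1 : Matrix (Fin n) (Fin n) ℂ) - Complex.I • UZD.Hm z).det ≠ 0
      rw [hHmz, hIT]
      exact hdS
    have hAinv : A * A1⁻¹ = 1 - A1⁻¹ := by
      have hAeq : A = A1 - 1 := by rw [hA1]; abel
      rw [hAeq, sub_mul, Matrix.mul_nonsing_inv _ hA1u, one_mul]
    have hA1S : A * (1 - S) = 1 + S := by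
      rw [mul_sub, mul_one, hSdef, ← mul_assoc, hAinv, sub_mul, one_mul]
      abel
    have hUmz : UZD.Um z = A := by
      show ((1 : Matrix (Fin n) (Fin n) ℂ) + Complex.I • UZD.Hm z)
        * ((1 : Matrix (Fin n) (Fin n) ℂ) - Complex.I • UZD.Hm z)⁻¹ = A
      rw [hHmz, hIT, ← hA1S, mul_assoc, Matrix.mul_nonsing_inv _ hdSu, mul_one]
    have hz0 := hQU z hdmz
    rw [hQ0, map_zero, hUmz] at hz0
    exact (mul_eq_zero.mp hz0.symm).resolve_left (pow_ne_zero _ hdmz)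
  set Xm : Matrix (Fin n) (Fin n) (MvPolynomial (Fin n × Fin n) ℂ) :=
    Matrix.of fun a b => MvPolynomial.X (a, b) with hXm
  set qd : MvPolynomial (Fin n × Fin n) ℂ :=
    ((1 : Matrix (Fin n) (Fin n) (MvPolynomial (Fin n × Fin n) ℂ)) + Xm).det with hqd
  have hqdeval : ∀ A : Matrix (Fin n) (Fin n) ℂ,
      MvPolynomial.eval (fun p => A p.1 p.2) qd = ((1 + A) : Matrix (Fin n) (Fin n) ℂ).det := by
    intro A
    rw [hqd, RingHom.map_det, RingHom.mapMatrix_apply]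
    congr 1
    ext i j
    by_cases hij : i = j <;> simp [hXm, Matrix.one_apply, hij]
  have hPq : P * qd = 0 := by
    apply MvPolynomial.funext
    intro x
    rw [_root_.map_mul, map_zero]
    set A : Matrix (Fin n) (Fin n) ℂ := Matrix.of fun a b => x (a, b) with hA
    have hxA : (fun p : Fin n × Fin n => A p.1 p.2) = x := by
      funext p
      simp [hA]
    by_cases hd : ((1 + A) : Matrix (Fin n) (Fin n) ℂ).det = 0
    · rw [← hxA, hqdeval, hd, mul_zero]
    · rw [← hxA, hP1 A hd, zero_mul]
  have hqd0 : qd ≠ 0 := by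
    intro h0
    have h1 := hqdeval 0
    rw [h0, map_zero] at h1
    simp at h1
  rcases mul_eq_zero.mp hPq with hP0 | hq0
  · exact hP0
  · exact absurd hq0 hqd0
end

section
/- Let j, n ≥ 1 and let P be a polynomial with complex coefficients in the entries of j generic n×n matrices (an element of MvPolynomial (Fin j × Fin n × Fin n) ℂ). If P evaluates to 0 at every j-tuple (H₁, …, H_j) of Hermitian n×n complex matrices, then P = 0. (Tuples of Hermitian matrices are Zariski-dense in the space of all j-tuples of complex matrices.) -/
open Matrix

lemma realpoints_zero : ∀ (m : ℕ) (Q : MvPolynomial (Fin m) ℂ),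
    (∀ r : Fin m → ℝ, MvPolynomial.eval (fun s => (r s : ℂ)) Q = 0) → Q = 0 := by
  intro m
  induction m with
  | zero =>
      intro Q hQ
      obtain ⟨c, rfl⟩ := MvPolynomial.C_surjective (Fin 0) Q
      have := hQ (fun s => 0)
      rw [MvPolynomial.eval_C] at this
      rw [this, map_zero]
  | succ k ih =>
      intro Q hQ
      have key : ∀ r : Fin k → ℝ,
          Polynomial.map (MvPolynomial.eval (fun s => (r s : ℂ)))
            (MvPolynomial.finSuccEquiv ℂ k Q) = 0 := by
        intro r
        apply Polynomial.eq_zero_of_infinite_isRoot _ (Set.infinite_of_injective_forall_mem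
          (f := fun t : ℝ => (t : ℂ)) Complex.ofReal_injective ?_)
        intro t
        simp only [Polynomial.IsRoot, Set.mem_setOf_eq]
        rw [← MvPolynomial.eval_eq_eval_mv_eval']
        have heq : (Fin.cons (t : ℂ) (fun s => ((r s : ℝ) : ℂ)) : Fin (k+1) → ℂ)
            = fun s => (((Fin.cons t r : Fin (k+1) → ℝ) s : ℝ) : ℂ) := by
          funext s
          refine Fin.cases ?_ ?_ s <;> simp
        rw [heq]
        exact hQ _
      have hcoef : ∀ i : ℕ, (MvPolynomial.finSuccEquiv ℂ k Q).coeff i = 0 := by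
        intro i
        apply ih
        intro r
        have := congrArg (fun p => Polynomial.coeff p i) (key r)
        simpa [Polynomial.coeff_map] using this
      have : MvPolynomial.finSuccEquiv ℂ k Q = 0 := Polynomial.ext fun i => by
        simp [hcoef i]
      exact (map_eq_zero_iff _ (AlgEquiv.injective _)).1 this

lemma realpoints_zero' {σ : Type*} [Fintype σ] (Q : MvPolynomial σ ℂ)
    (hQ : ∀ r : σ → ℝ, MvPolynomial.eval (fun s => (r s : ℂ)) Q = 0) : Q = 0 := by
  let e := Fintype.equivFin σ
  have h2 : MvPolynomial.rename e Q = 0 := by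
    apply realpoints_zero
    intro r
    rw [MvPolynomial.eval_rename]
    exact hQ fun s => r (e s)
  exact (MvPolynomial.rename_injective e e.injective) (by simpa using h2)

/-- Tuples of Hermitian matrices are Zariski-dense in the space of all
`j`-tuples of `n × n` complex matrices: if a polynomial `P` in the entries of
`j` generic matrices vanishes at every `j`-tuple of Hermitian matrices, then
`P = 0`. -/
theorem hermitian_tuples_zariskiDense (j n : ℕ) (hj : 1 ≤ j) (hn : 1 ≤ n)
    (P : MvPolynomial (Fin j × Fin n × Fin n) ℂ)
    (h : ∀ H : Fin j → Matrix (Fin n) (Fin n) ℂ, (∀ i, (H i).IsHermitian) →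
      MvPolynomial.eval (fun p => H p.1 p.2.1 p.2.2) P = 0) :
    P = 0 := by
  classical
  -- the linear parametrization
  set L : (Fin j × Fin n × Fin n → ℂ) → Fin j → Matrix (Fin n) (Fin n) ℂ :=
    fun t i => Matrix.of fun a b =>
      if a = b then t (i, a, b)
      else if (a : ℕ) < b then t (i, a, b) + Complex.I * t (i, b, a)
      else t (i, b, a) - Complex.I * t (i, a, b) with hL
  -- for real t, L t is Hermitian
  have hHerm : ∀ r : Fin j × Fin n × Fin n → ℝ, ∀ i, (L (fun p => (r p : ℂ)) i).IsHermitian := by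
    intro r i
    ext a b
    simp only [hL, conjTranspose_apply, of_apply]
    rcases lt_trichotomy (a : ℕ) (b : ℕ) with hab | hab | hab
    · have hne : b ≠ a := fun e => by omega
      have hne' : a ≠ b := fun e => by omega
      rw [if_neg hne, if_neg (by omega : ¬ (b : ℕ) < a), if_neg hne', if_pos hab]
      simp [Complex.ext_iff]
    · have : a = b := Fin.ext hab
      subst this
      simp [Complex.ext_iff]
    · have hne : b ≠ a := fun e => by omega
      have hne' : a ≠ b := fun e => by omega
      rw [if_neg hne, if_pos hab, if_neg hne', if_neg (by omega : ¬ (a:ℕ) < b)]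
      simp [Complex.ext_iff]
  -- surjectivity of L
  have hsurj : ∀ x : Fin j → Matrix (Fin n) (Fin n) ℂ, ∃ t, L t = x := by
    intro x
    refine ⟨fun p =>
      if p.2.1 = p.2.2 then x p.1 p.2.1 p.2.2
      else if (p.2.1 : ℕ) < p.2.2 then (x p.1 p.2.1 p.2.2 + x p.1 p.2.2 p.2.1) / 2
      else (x p.1 p.2.2 p.2.1 - x p.1 p.2.1 p.2.2) / (2 * Complex.I), ?_⟩
    funext i
    ext a b
    simp only [hL, of_apply]
    rcases lt_trichotomy (a : ℕ) (b : ℕ) with hab | hab | hab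
    · have hne : a ≠ b := fun e => by omega
      have hne' : b ≠ a := fun e => by omega
      rw [if_neg hne, if_pos hab]
      simp only [if_neg hne, if_neg hne', if_pos hab, if_neg (by omega : ¬ (b:ℕ) < a)]
      have hI : (Complex.I : ℂ) ≠ 0 := Complex.I_ne_zero
      field_simp
      ring_nf
    · have : a = b := Fin.ext hab
      subst this; simp
    · have hne : a ≠ b := fun e => by omega
      have hne' : b ≠ a := fun e => by omega
      rw [if_neg hne, if_neg (by omega : ¬ (a:ℕ) < b)]
      simp only [if_neg hne, if_neg hne', if_pos hab, if_neg (by omega : ¬ (a:ℕ) < b)]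
      have hI : (Complex.I : ℂ) ≠ 0 := Complex.I_ne_zero
      field_simp
      ring_nf
  -- the substituted polynomial Q with eval t Q = eval (L t) P
  set s : Fin j × Fin n × Fin n → MvPolynomial (Fin j × Fin n × Fin n) ℂ :=
    fun p =>
      if p.2.1 = p.2.2 then MvPolynomial.X p
      else if (p.2.1 : ℕ) < p.2.2 then
        MvPolynomial.X p + MvPolynomial.C Complex.I * MvPolynomial.X (p.1, p.2.2, p.2.1)
      else MvPolynomial.X (p.1, p.2.2, p.2.1) - MvPolynomial.C Complex.I * MvPolynomial.X p
    with hs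
  set Q : MvPolynomial (Fin j × Fin n × Fin n) ℂ := MvPolynomial.bind₁ s P with hQdef
  have hev : ∀ t : Fin j × Fin n × Fin n → ℂ,
      MvPolynomial.eval t Q = MvPolynomial.eval (fun p => L t p.1 p.2.1 p.2.2) P := by
    intro t
    rw [hQdef, show (MvPolynomial.eval t : MvPolynomial (Fin j × Fin n × Fin n) ℂ →+* ℂ)
        = MvPolynomial.eval₂Hom (RingHom.id ℂ) t from rfl, MvPolynomial.eval₂Hom_bind₁]
    have heq : (fun i => MvPolynomial.eval₂Hom (RingHom.id ℂ) t (s i))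
        = fun p : Fin j × Fin n × Fin n => L t p.1 p.2.1 p.2.2 := by
      funext p
      obtain ⟨i, a, b⟩ := p
      simp only [hs, hL, of_apply]
      split_ifs <;> simp
    rw [heq]
    rfl
  have hQ0 : Q = 0 := by
    apply realpoints_zero'
    intro r
    rw [hev]
    exact h _ (hHerm r)
  -- conclude
  apply MvPolynomial.funext
  intro x
  obtain ⟨t, ht⟩ := hsurj (fun i => Matrix.of fun a b => x (i, a, b))
  have hx : (fun p : Fin j × Fin n × Fin n => L t p.1 p.2.1 p.2.2) = x := by
    funext p
    rw [ht]
    rfl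
  have := hev t
  rw [hQ0, hx] at this
  simp only [map_zero] at this
  simp [← this]
end

section
/- Isomorphism between unitary and general linear invariants (Procesi): let j, n ≥ 1. Consider the ℂ-algebra homomorphism Φ sending a polynomial P in the entries of 2j generic n×n matrices to the function x ↦ (evaluation of P at (x₁,…,x_j, x₁ᴴ,…,x_jᴴ)). Then the restriction of Φ to the subalgebra of polynomials invariant under simultaneous conjugation by all g ∈ GL(n,ℂ) (acting as y_k ↦ g y_k g⁻¹ on all 2j matrix variables) is injective, and its image equals the set of all functions of the form x ↦ (evaluation of some polynomial Q in 2j matrix variables at (x, xᴴ)) that are invariant under simultaneous unitary conjugation x ↦ (i ↦ U · (x i) · Uᴴ) for all U ∈ U(n,ℂ). Hence the ring of U(n,ℂ) invariants of j complex matrices is isomorphic, as a ℂ-algebra, to the ring of GL(n,ℂ) invariants of the 2j matrices x₁,…,x_j, x₁ᴴ,…,x_jᴴ. -/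
/-!
Restricted to a complex line through a point of the real form `{v | v ∘ τ = conj ∘ v}`, a
polynomial becomes an entire function of one variable, which is determined by its values on `ℝ`.
For `τ = transposeSwap` the real form consists exactly of the points `(x, xᴴ)`, so a polynomial is
determined by its values there. This gives injectivity, and it upgrades invariance of `Q(x, xᴴ)`
under unitary conjugation to invariance of `Q(y)` under simultaneous unitary conjugation of all
`2j` matrix variables. Conjugation by `diag(t)`, `t > 0`, is reached by continuing the unitary
family `θ ↦ diag(t^{iθ})` analytically to `θ = -i`, and every `g ∈ GL(n, ℂ)` factors as
`U D Vᴴ` with `U, V` unitary and `D` positive diagonal.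
-/

open Matrix MvPolynomial Filter Topology Set

theorem AnalyticOnNhd.eq_of_forall_real_eq {f g : ℂ → ℂ} (hf : AnalyticOnNhd ℂ f univ)
    (hg : AnalyticOnNhd ℂ g univ) (h : ∀ t : ℝ, f t = g t) : f = g := by
  refine hf.eq_of_frequently_eq hg (z₀ := 0) ?_
  have hreal : Tendsto ((↑) : ℝ → ℂ) (𝓝[≠] 0) (𝓝[≠] 0) :=
    Complex.continuous_ofReal.continuousWithinAt.tendsto_nhdsWithin
      fun t ht => by simpa using ht
  exact hreal.frequently (Eventually.frequently (Eventually.of_forall h))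

theorem MvPolynomial.eq_of_eval_eq_on_realForm {σ : Type*} {τ : σ → σ}
    (hτ : Function.Involutive τ) {P Q : MvPolynomial σ ℂ}
    (h : ∀ v : σ → ℂ, (∀ s, v (τ s) = starRingEnd ℂ (v s)) → eval v P = eval v Q) :
    P = Q := by
  refine MvPolynomial.funext fun w => ?_
  -- `w = v + I * u`, where `v + t * u` lies on the real form for every real `t`
  set v : σ → ℂ := fun s => (w s + starRingEnd ℂ (w (τ s))) / 2
  set u : σ → ℂ := fun s => (w s - starRingEnd ℂ (w (τ s))) / (2 * Complex.I)
  have hline : ∀ R : MvPolynomial σ ℂ,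
      AnalyticOnNhd ℂ (fun z : ℂ => eval (fun s => v s + z * u s) R) univ := fun R =>
    AnalyticOnNhd.aeval_mvPolynomial (fun s z _ => by fun_prop) R
  have hreal := (hline P).eq_of_forall_real_eq (hline Q) fun t => h _ fun s => by
    simp only [v, u, hτ s, map_add, map_div₀, map_mul, map_sub, map_ofNat, Complex.conj_conj,
      Complex.conj_I, Complex.conj_ofReal]
    rw [mul_neg, div_neg]
    ring
  have hw : (fun s => v s + Complex.I * u s) = w := by
    funext s
    simp only [v, u]
    field_simp
    ring
  simpa [hw] using congrFun hreal Complex.I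

section MatrixVariables

variable {ι κ m : Type*}

def withConjTranspose (x : ι → Matrix m m ℂ) : (ι ⊕ ι) × m × m → ℂ :=
  fun p => Sum.elim x (fun i => (x i)ᴴ) p.1 p.2.1 p.2.2

def transposeSwap (p : (ι ⊕ ι) × m × m) : (ι ⊕ ι) × m × m :=
  (p.1.swap, p.2.2, p.2.1)

theorem transposeSwap_involutive : Function.Involutive (transposeSwap (ι := ι) (m := m)) := by
  rintro ⟨k, a, b⟩
  simp [transposeSwap]

theorem eq_withConjTranspose_of_realForm {v : (ι ⊕ ι) × m × m → ℂ}
    (hv : ∀ s, v (transposeSwap s) = starRingEnd ℂ (v s)) :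
    v = withConjTranspose fun k => of fun a b => v (.inl k, a, b) := by
  funext p
  obtain ⟨k | k, a, b⟩ := p
  · rfl
  · exact hv (.inl k, b, a)

theorem MvPolynomial.eq_of_eval_withConjTranspose_eq {P Q : MvPolynomial ((ι ⊕ ι) × m × m) ℂ}
    (h : ∀ x, eval (withConjTranspose x) P = eval (withConjTranspose x) Q) : P = Q :=
  eq_of_eval_eq_on_realForm transposeSwap_involutive fun v hv => by
    rw [eq_withConjTranspose_of_realForm hv]
    exact h _

variable [Fintype m]

def SandwichInvariant (Q : MvPolynomial (κ × m × m) ℂ) (A B : Matrix m m ℂ) : Prop :=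
  ∀ y : κ → Matrix m m ℂ,
    eval (fun p => (A * y p.1 * B) p.2.1 p.2.2) Q = eval (fun p => y p.1 p.2.1 p.2.2) Q

theorem SandwichInvariant.mul {Q : MvPolynomial (κ × m × m) ℂ} {A B A' B' : Matrix m m ℂ}
    (h : SandwichInvariant Q A B) (h' : SandwichInvariant Q A' B') :
    SandwichInvariant Q (A * A') (B' * B) := fun y => by
  calc eval (fun p => (A * A' * y p.1 * (B' * B)) p.2.1 p.2.2) Q
      = eval (fun p => (A * (A' * y p.1 * B') * B) p.2.1 p.2.2) Q := by
        simp only [Matrix.mul_assoc]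
    _ = eval (fun p => y p.1 p.2.1 p.2.2) Q := (h fun k => A' * y k * B').trans (h' y)

noncomputable def sandwich (A B : Matrix m m ℂ) :
    MvPolynomial (κ × m × m) ℂ →ₐ[ℂ] MvPolynomial (κ × m × m) ℂ :=
  aeval fun v => ∑ c, ∑ d, C (A v.2.1 c * B d v.2.2) * X (v.1, c, d)

theorem eval_sandwich (A B : Matrix m m ℂ) (Q : MvPolynomial (κ × m × m) ℂ)
    (y : κ → Matrix m m ℂ) :
    eval (fun p => y p.1 p.2.1 p.2.2) (sandwich A B Q) =
      eval (fun p => (A * y p.1 * B) p.2.1 p.2.2) Q := by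
  rw [← aeval_eq_eval, ← aeval_eq_eval, sandwich, ← AlgHom.comp_apply, comp_aeval]
  congr 2
  funext p
  simp only [map_sum, map_mul, aeval_C, aeval_X, Algebra.algebraMap_self, RingHom.id_apply,
    mul_apply, Finset.sum_mul]
  rw [Finset.sum_comm]
  exact Finset.sum_congr rfl fun _ _ => Finset.sum_congr rfl fun _ _ => by ring

theorem withConjTranspose_conj (U : Matrix m m ℂ) (x : ι → Matrix m m ℂ) :
    withConjTranspose (fun i => U * x i * Uᴴ) =
      fun p => (U * Sum.elim x (fun i => (x i)ᴴ) p.1 * Uᴴ) p.2.1 p.2.2 := by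
  funext p
  obtain ⟨k | k, a, b⟩ := p
  · rfl
  · simp [withConjTranspose, conjTranspose_mul, Matrix.mul_assoc]

theorem sandwichInvariant_conjTranspose_iff {Q : MvPolynomial ((ι ⊕ ι) × m × m) ℂ}
    {U : Matrix m m ℂ} :
    SandwichInvariant Q U Uᴴ ↔
      ∀ x, eval (withConjTranspose fun i => U * x i * Uᴴ) Q = eval (withConjTranspose x) Q := by
  refine ⟨fun h x => by rw [withConjTranspose_conj]; exact h _, fun h => ?_⟩
  have hQ : sandwich U Uᴴ Q = Q := eq_of_eval_withConjTranspose_eq fun x => by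
    rw [← h, withConjTranspose_conj]
    exact eval_sandwich U Uᴴ Q _
  intro y
  rw [← eval_sandwich, hQ]

theorem SandwichInvariant.diagonal_of_unitary [DecidableEq m]
    {Q : MvPolynomial (κ × m × m) ℂ} (h : ∀ U ∈ unitaryGroup m ℂ, SandwichInvariant Q U Uᴴ)
    {t : m → ℝ} (ht : ∀ i, 0 < t i) :
    SandwichInvariant Q (diagonal fun i => (t i : ℂ)) (diagonal fun i => (t i : ℂ)⁻¹) := by
  intro y
  -- continue `θ ↦ diagonal (exp (θ I log t))` analytically from real `θ` to `θ = -I`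
  set E : ℂ → Matrix m m ℂ := fun z => diagonal fun i => Complex.exp (z * Real.log (t i))
  set F : ℂ → ℂ := fun z =>
    eval (fun p => (E (z * Complex.I) * y p.1 * E (-(z * Complex.I))) p.2.1 p.2.2) Q
  have hF : AnalyticOnNhd ℂ F univ := by
    simp only [F, E, diagonal_mul, mul_diagonal]
    exact AnalyticOnNhd.aeval_mvPolynomial (fun p z _ => by fun_prop) Q
  have hE : ∀ θ : ℝ, (E (θ * Complex.I))ᴴ = E (-(θ * Complex.I)) := fun θ => by
    simp only [E, diagonal_conjTranspose, Pi.star_def]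
    congr
    funext i
    rw [Complex.star_def, ← Complex.exp_conj]
    simp only [map_mul, Complex.conj_ofReal, Complex.conj_I]
    ring_nf
  have hunitary : ∀ θ : ℝ, E (θ * Complex.I) ∈ unitaryGroup m ℂ := fun θ => by
    rw [mem_unitaryGroup_iff, star_eq_conjTranspose, hE]
    simp [E, ← Complex.exp_add]
  have hconst := hF.eq_of_forall_real_eq analyticOnNhd_const fun θ => by
    simp only [F, ← hE]
    exact h _ (hunitary θ) y
  have hexp_log : ∀ i, Complex.exp (Real.log (t i)) = t i := fun i => by
    rw [← Complex.ofReal_exp, Real.exp_log (ht i)]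
  simpa [F, E, hexp_log, Complex.exp_neg] using congrFun hconst (-Complex.I)

open scoped ComplexOrder in
theorem Matrix.exists_unitary_mul_diagonal_mul_conjTranspose [DecidableEq m] {M : Matrix m m ℂ}
    (hM : IsUnit M) :
    ∃ U ∈ unitaryGroup m ℂ, ∃ V ∈ unitaryGroup m ℂ, ∃ t : m → ℝ, (∀ i, 0 < t i) ∧
      M = U * diagonal (fun i => (t i : ℂ)) * Vᴴ := by
  have hA : (Mᴴ * M).PosDef := .conjTranspose_mul_self M (mulVec_injective_iff_isUnit.mpr hM)
  have hdiag := hA.1.conjStarAlgAut_star_eigenvectorUnitary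
  rw [Unitary.conjStarAlgAut_star_apply] at hdiag
  generalize hA.1.eigenvectorUnitary = V at hdiag
  obtain ⟨V, hV⟩ := V
  set t : m → ℝ := fun i => √(hA.1.eigenvalues i)
  have ht : ∀ i, 0 < t i := fun i => Real.sqrt_pos.mpr (hA.eigenvalues_pos i)
  have htC : ∀ i, (t i : ℂ) ≠ 0 := fun i => Complex.ofReal_ne_zero.mpr (ht i).ne'
  replace hdiag : Vᴴ * (Mᴴ * M) * V = diagonal fun i => (t i : ℂ) * t i := by
    rw [← star_eq_conjTranspose, hdiag]
    congr
    funext i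
    rw [Function.comp_apply, ← Complex.ofReal_mul, Real.mul_self_sqrt (hA.eigenvalues_pos i).le]
    rfl
  set D' : Matrix m m ℂ := diagonal fun i => (t i : ℂ)⁻¹
  have hD' : D'ᴴ = D' := by simp [D', diagonal_conjTranspose]
  refine ⟨M * V * D', ?_, V, hV, t, ht, ?_⟩
  · rw [mem_unitaryGroup_iff', star_eq_conjTranspose]
    calc (M * V * D')ᴴ * (M * V * D') = D' * (Vᴴ * (Mᴴ * M) * V) * D' := by
          simp only [conjTranspose_mul, hD', Matrix.mul_assoc]
      _ = 1 := by
          rw [hdiag, ← diagonal_one]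
          simp only [D', diagonal_mul_diagonal]
          congr
          funext i
          field_simp [htC i]
  · have hV' : V * Vᴴ = 1 := by rwa [mem_unitaryGroup_iff, star_eq_conjTranspose] at hV
    have hD'D : D' * diagonal (fun i => (t i : ℂ)) = 1 := by
      simp [D', diagonal_mul_diagonal, htC]
    calc M = M * (V * (D' * diagonal fun i => (t i : ℂ)) * Vᴴ) := by
          rw [hD'D, Matrix.mul_one, hV', Matrix.mul_one]
      _ = M * V * D' * diagonal (fun i => (t i : ℂ)) * Vᴴ := by simp only [Matrix.mul_assoc]

theorem SandwichInvariant.of_unitary [DecidableEq m] {Q : MvPolynomial (κ × m × m) ℂ}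
    (h : ∀ U ∈ unitaryGroup m ℂ, SandwichInvariant Q U Uᴴ) (g : GL m ℂ) :
    SandwichInvariant Q g ↑g⁻¹ := by
  obtain ⟨U, hU, V, hV, t, ht, hg⟩ := exists_unitary_mul_diagonal_mul_conjTranspose g.isUnit
  have hginv : (↑g⁻¹ : Matrix m m ℂ) = V * diagonal (fun i => (t i : ℂ)⁻¹) * Uᴴ := by
    have hVV : Vᴴ * V = 1 := by rwa [mem_unitaryGroup_iff', star_eq_conjTranspose] at hV
    have hUU : U * Uᴴ = 1 := by rwa [mem_unitaryGroup_iff, star_eq_conjTranspose] at hU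
    have hDD : (diagonal fun i => (t i : ℂ)) * diagonal (fun i => (t i : ℂ)⁻¹) = 1 := by
      simp [diagonal_mul_diagonal, (ht _).ne']
    rw [coe_units_inv, hg]
    refine inv_eq_right_inv ?_
    calc U * diagonal (fun i => (t i : ℂ)) * Vᴴ * (V * diagonal (fun i => (t i : ℂ)⁻¹) * Uᴴ)
        = U * ((diagonal fun i => (t i : ℂ)) * (Vᴴ * V) * diagonal fun i => (t i : ℂ)⁻¹) * Uᴴ := by
          simp only [Matrix.mul_assoc]
      _ = 1 := by rw [hVV, Matrix.mul_one, hDD, Matrix.mul_one, hUU]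
  have hV' : SandwichInvariant Q Vᴴ V := by
    simpa using h Vᴴ (by simpa [star_eq_conjTranspose] using Unitary.star_mem hV)
  rw [hginv, hg, Matrix.mul_assoc U]
  exact (h U hU).mul ((diagonal_of_unitary h ht).mul hV')

end MatrixVariables

theorem unitary_invariants_iso_GL_invariants_general (j n : ℕ)
    (Φ : MvPolynomial ((Fin j ⊕ Fin j) × Fin n × Fin n) ℂ →ₐ[ℂ]
      ((Fin j → Matrix (Fin n) (Fin n) ℂ) → ℂ))
    (hΦ : ∀ (P : MvPolynomial ((Fin j ⊕ Fin j) × Fin n × Fin n) ℂ)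
        (x : Fin j → Matrix (Fin n) (Fin n) ℂ),
      Φ P x = MvPolynomial.eval
        (fun p => Sum.elim x (fun i => (x i)ᴴ) p.1 p.2.1 p.2.2) P) :
    Set.InjOn ⇑Φ
      {P : MvPolynomial ((Fin j ⊕ Fin j) × Fin n × Fin n) ℂ |
        ∀ (g : GL (Fin n) ℂ) (y : (Fin j ⊕ Fin j) → Matrix (Fin n) (Fin n) ℂ),
          MvPolynomial.eval
            (fun p => ((g : Matrix (Fin n) (Fin n) ℂ) * y p.1 *
              ((g⁻¹ : GL (Fin n) ℂ) : Matrix (Fin n) (Fin n) ℂ)) p.2.1 p.2.2) P =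
          MvPolynomial.eval (fun p => y p.1 p.2.1 p.2.2) P} ∧
    ⇑Φ '' {P : MvPolynomial ((Fin j ⊕ Fin j) × Fin n × Fin n) ℂ |
        ∀ (g : GL (Fin n) ℂ) (y : (Fin j ⊕ Fin j) → Matrix (Fin n) (Fin n) ℂ),
          MvPolynomial.eval
            (fun p => ((g : Matrix (Fin n) (Fin n) ℂ) * y p.1 *
              ((g⁻¹ : GL (Fin n) ℂ) : Matrix (Fin n) (Fin n) ℂ)) p.2.1 p.2.2) P =
          MvPolynomial.eval (fun p => y p.1 p.2.1 p.2.2) P}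
      = {F : (Fin j → Matrix (Fin n) (Fin n) ℂ) → ℂ |
          (∃ Q : MvPolynomial ((Fin j ⊕ Fin j) × Fin n × Fin n) ℂ,
            ∀ x : Fin j → Matrix (Fin n) (Fin n) ℂ,
              F x = MvPolynomial.eval
                (fun p => Sum.elim x (fun i => (x i)ᴴ) p.1 p.2.1 p.2.2) Q) ∧
          ∀ U ∈ Matrix.unitaryGroup (Fin n) ℂ,
            ∀ x : Fin j → Matrix (Fin n) (Fin n) ℂ,
              F (fun i => U * x i * Uᴴ) = F x} := by
  have hΦ_injective : Function.Injective Φ := fun P Q hPQ =>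
    eq_of_eval_withConjTranspose_eq fun x => (hΦ P x).symm.trans ((congrFun hPQ x).trans (hΦ Q x))
  refine ⟨hΦ_injective.injOn, ?_⟩
  ext F
  constructor
  · rintro ⟨P, hP, rfl⟩
    refine ⟨⟨P, hΦ P⟩, fun U hU x => ?_⟩
    have hUP : SandwichInvariant P U Uᴴ := hP (Unitary.toUnits ⟨U, hU⟩)
    exact (hΦ P _).trans ((sandwichInvariant_conjTranspose_iff.mp hUP x).trans (hΦ P x).symm)
  · rintro ⟨⟨Q, hQ⟩, hinv⟩
    refine ⟨Q, SandwichInvariant.of_unitary fun U hU =>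
      sandwichInvariant_conjTranspose_iff.mpr fun x =>
        (hQ _).symm.trans ((hinv U hU x).trans (hQ x)), funext fun x => (hΦ Q x).trans (hQ x).symm⟩

/-- Isomorphism between unitary and general linear invariants (Procesi): the
ℂ-algebra homomorphism `Φ`, sending a polynomial `P` in the entries of `2j`
generic `n × n` matrices to the function `x ↦ P(x₁, …, x_j, x₁ᴴ, …, x_jᴴ)`,
restricts to an injection on the subalgebra of polynomials invariant under
simultaneous conjugation by all `g ∈ GL(n,ℂ)`, and its image equals the set of
all functions of the form `x ↦ Q(x, xᴴ)` that are invariant under simultaneous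
unitary conjugation.  Hence the ring of `U(n,ℂ)` invariants of `j` complex
matrices is isomorphic, as a ℂ-algebra, to the ring of `GL(n,ℂ)` invariants of
the `2j` matrices `x₁, …, x_j, x₁ᴴ, …, x_jᴴ`. -/
theorem unitary_invariants_iso_GL_invariants (j n : ℕ) (hj : 1 ≤ j) (hn : 1 ≤ n)
    (Φ : MvPolynomial ((Fin j ⊕ Fin j) × Fin n × Fin n) ℂ →ₐ[ℂ]
      ((Fin j → Matrix (Fin n) (Fin n) ℂ) → ℂ))
    (hΦ : ∀ (P : MvPolynomial ((Fin j ⊕ Fin j) × Fin n × Fin n) ℂ)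
        (x : Fin j → Matrix (Fin n) (Fin n) ℂ),
      Φ P x = MvPolynomial.eval
        (fun p => Sum.elim x (fun i => (x i)ᴴ) p.1 p.2.1 p.2.2) P) :
    Set.InjOn ⇑Φ
      {P : MvPolynomial ((Fin j ⊕ Fin j) × Fin n × Fin n) ℂ |
        ∀ (g : GL (Fin n) ℂ) (y : (Fin j ⊕ Fin j) → Matrix (Fin n) (Fin n) ℂ),
          MvPolynomial.eval
            (fun p => ((g : Matrix (Fin n) (Fin n) ℂ) * y p.1 *
              ((g⁻¹ : GL (Fin n) ℂ) : Matrix (Fin n) (Fin n) ℂ)) p.2.1 p.2.2) P =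
          MvPolynomial.eval (fun p => y p.1 p.2.1 p.2.2) P} ∧
    ⇑Φ '' {P : MvPolynomial ((Fin j ⊕ Fin j) × Fin n × Fin n) ℂ |
        ∀ (g : GL (Fin n) ℂ) (y : (Fin j ⊕ Fin j) → Matrix (Fin n) (Fin n) ℂ),
          MvPolynomial.eval
            (fun p => ((g : Matrix (Fin n) (Fin n) ℂ) * y p.1 *
              ((g⁻¹ : GL (Fin n) ℂ) : Matrix (Fin n) (Fin n) ℂ)) p.2.1 p.2.2) P =
          MvPolynomial.eval (fun p => y p.1 p.2.1 p.2.2) P}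
      = {F : (Fin j → Matrix (Fin n) (Fin n) ℂ) → ℂ |
          (∃ Q : MvPolynomial ((Fin j ⊕ Fin j) × Fin n × Fin n) ℂ,
            ∀ x : Fin j → Matrix (Fin n) (Fin n) ℂ,
              F x = MvPolynomial.eval
                (fun p => Sum.elim x (fun i => (x i)ᴴ) p.1 p.2.1 p.2.2) Q) ∧
          ∀ U ∈ Matrix.unitaryGroup (Fin n) ℂ,
            ∀ x : Fin j → Matrix (Fin n) (Fin n) ℂ,
              F (fun i => U * x i * Uᴴ) = F x} :=
  unitary_invariants_iso_GL_invariants_general j n Φ hΦ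
end

section
/- U(n,ℂ) is a maximal compact subgroup of GL(n,ℂ): for every n ≥ 1, if G is a subgroup of GL(n,ℂ) whose underlying set of matrices is compact (in the topology induced from the space of n×n complex matrices) and G contains every unitary matrix, then G consists exactly of the unitary matrices. -/
/-!
Write `g ∈ G` as `g = u D V*` (singular value decomposition) with `u, V` unitary and
`D = diag(μ)` positive diagonal. Since `G` contains the unitaries, `D = u* g V ∈ G`, so all powers
`D^k` and `D^-k` lie in the compact set `G`; their diagonal entries `μᵢ^k`, `μᵢ^-k` stay bounded,
forcing `μᵢ = 1`. Hence `D = 1` and `g = u V*` is unitary.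
-/

open Matrix
open scoped ComplexOrder

theorem norm_le_one_of_isBounded_of_forall_pow_mem {𝕜 : Type*} [NormedDivisionRing 𝕜]
    {s : Set 𝕜} (hs : Bornology.IsBounded s) {x : 𝕜} (hx : ∀ k : ℕ, x ^ k ∈ s) : ‖x‖ ≤ 1 := by
  obtain ⟨C, hC⟩ := isBounded_iff_forall_norm_le.1 hs
  by_contra! h
  obtain ⟨k, hk⟩ := pow_unbounded_of_one_lt C h
  exact (hC _ (hx k)).not_gt (norm_pow x k ▸ hk)

theorem Subgroup.exists_mem_val_eq_star_mul_mul {R : Type*} [Monoid R] [StarMul R]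
    {G : Subgroup Rˣ} (hG : ∀ g : Rˣ, (g : R) ∈ unitary R → g ∈ G) {g : Rˣ} (hg : g ∈ G)
    {u v : R} (hu : u ∈ unitary R) (hv : v ∈ unitary R) :
    ∃ d ∈ G, (d : R) = star u * g * v :=
  ⟨(Unitary.toUnits ⟨u, hu⟩)⁻¹ * g * Unitary.toUnits ⟨v, hv⟩,
    mul_mem (mul_mem (inv_mem (hG _ hu)) hg) (hG _ hv), rfl⟩

namespace Matrix

variable {n : Type*} [Fintype n] [DecidableEq n]

theorem mul_inv_mem_unitaryGroup_of_conjTranspose_mul_self_eq {R : Type*} [CommRing R]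
    [StarRing R] {A W : Matrix n n R} (hW : IsUnit W) (h : Aᴴ * A = Wᴴ * W) :
    A * W⁻¹ ∈ unitaryGroup n R := by
  have hWW : W * W⁻¹ = 1 := mul_nonsing_inv W ((isUnit_iff_isUnit_det W).1 hW)
  rw [mem_unitaryGroup_iff', star_mul, star_eq_conjTranspose, star_eq_conjTranspose]
  calc W⁻¹ᴴ * Aᴴ * (A * W⁻¹) = (W * W⁻¹)ᴴ * (W * W⁻¹) := by
        rw [conjTranspose_mul, mul_assoc, ← mul_assoc Aᴴ, h]; noncomm_ring
    _ = 1 := by rw [hWW, conjTranspose_one, one_mul]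

theorem exists_unitary_mul_diagonal_mul_star_of_isUnit {𝕜 : Type*} [RCLike 𝕜]
    {M : Matrix n n 𝕜} (hM : IsUnit M) :
    ∃ u ∈ unitaryGroup n 𝕜, ∃ V ∈ unitaryGroup n 𝕜, ∃ μ : n → ℝ,
      (∀ i, 0 < μ i) ∧ M = u * diagonal (RCLike.ofReal ∘ μ) * star V := by
  have hA : (Mᴴ * M).PosDef := PosDef.conjTranspose_mul_self M (mulVec_injective_iff_isUnit.2 hM)
  set V := hA.1.eigenvectorUnitary
  set μ : n → ℝ := fun i => √(hA.1.eigenvalues i)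
  have hμ : ∀ i, 0 < μ i := fun i => Real.sqrt_pos.2 (hA.eigenvalues_pos i)
  set D : Matrix n n 𝕜 := diagonal (RCLike.ofReal ∘ μ)
  have hD : IsUnit D := isUnit_diagonal.2 <| Pi.isUnit_iff.2 fun i =>
    isUnit_iff_ne_zero.2 (RCLike.ofReal_ne_zero.2 (hμ i).ne')
  -- `M` and `W := D V*` have the same Gram matrix `V diag(μ²) V*`, so `M W⁻¹` is unitary.
  have hW : IsUnit (D * star (V : Matrix n n 𝕜)) := hD.mul (Unitary.isUnit_coe (U := V)).star
  have hgram : Mᴴ * M = (D * star (V : Matrix n n 𝕜))ᴴ * (D * star (V : Matrix n n 𝕜)) := by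
    have hDD : Dᴴ * D = diagonal (RCLike.ofReal ∘ hA.1.eigenvalues) := by
      rw [diagonal_conjTranspose, diagonal_mul_diagonal]
      congr 1; ext i
      simp [μ, ← RCLike.ofReal_mul, Real.mul_self_sqrt (hA.eigenvalues_pos i).le]
    rw [conjTranspose_mul, star_eq_conjTranspose (V : Matrix n n 𝕜), conjTranspose_conjTranspose,
      mul_assoc, ← mul_assoc Dᴴ, hDD, ← mul_assoc]
    exact hA.1.spectral_theorem
  refine ⟨M * (D * star (V : Matrix n n 𝕜))⁻¹,
    mul_inv_mem_unitaryGroup_of_conjTranspose_mul_self_eq hW hgram, V, V.2, μ, hμ, ?_⟩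
  rw [mul_assoc _ D, nonsing_inv_mul_cancel_right _ _ ((isUnit_iff_isUnit_det _).1 hW)]

theorem norm_eq_one_of_coe_eq_diagonal {𝕜 : Type*} [NormedField 𝕜] {G : Subgroup (GL n 𝕜)}
    (hG : IsCompact ((↑) '' (G : Set (GL n 𝕜)) : Set (Matrix n n 𝕜)))
    {g : GL n 𝕜} (hg : g ∈ G) {w : n → 𝕜} (hw : (g : Matrix n n 𝕜) = diagonal w) (i : n) :
    ‖w i‖ = 1 := by
  have hbdd := (hG.image (continuous_id.matrix_elem i i)).isBounded
  have norm_le_one : ∀ h ∈ G, ∀ v : n → 𝕜, (h : Matrix n n 𝕜) = diagonal v → ‖v i‖ ≤ 1 :=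
    fun h hh v hv => norm_le_one_of_isBounded_of_forall_pow_mem hbdd fun k =>
      ⟨_, ⟨h ^ k, pow_mem hh k, rfl⟩, by simp [hv, diagonal_pow]⟩
  have hw0 : ∀ j, w j ≠ 0 := fun j =>
    (Pi.isUnit_iff.1 (isUnit_diagonal.1 (hw ▸ g.isUnit)) j).ne_zero
  have hinv : ((g⁻¹ : GL n 𝕜) : Matrix n n 𝕜) = diagonal fun j => (w j)⁻¹ :=
    Units.inv_eq_of_mul_eq_one_right (by simp [hw, hw0])
  have hinv_le := norm_le_one _ (inv_mem hg) _ hinv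
  rw [norm_inv, inv_le_one₀ (norm_pos_iff.2 (hw0 i))] at hinv_le
  exact le_antisymm (norm_le_one g hg w hw) hinv_le

end Matrix

theorem unitaryGroup_maximal_compact_general (n : ℕ)
    (G : Subgroup (GL (Fin n) ℂ))
    (hcompact : IsCompact
      ((fun g : GL (Fin n) ℂ => (g : Matrix (Fin n) (Fin n) ℂ)) '' (G : Set (GL (Fin n) ℂ))))
    (hunitary : ∀ g : GL (Fin n) ℂ,
      (g : Matrix (Fin n) (Fin n) ℂ) ∈ Matrix.unitaryGroup (Fin n) ℂ → g ∈ G) :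
    ∀ g : GL (Fin n) ℂ,
      g ∈ G ↔ (g : Matrix (Fin n) (Fin n) ℂ) ∈ Matrix.unitaryGroup (Fin n) ℂ := by
  intro g
  refine ⟨fun hg => ?_, hunitary g⟩
  obtain ⟨u, hu, V, hV, μ, hμ, hg_eq⟩ := exists_unitary_mul_diagonal_mul_star_of_isUnit g.isUnit
  obtain ⟨d, hd, hd_eq⟩ := Subgroup.exists_mem_val_eq_star_mul_mul hunitary hg hu hV
  have hd_diag : (d : Matrix (Fin n) (Fin n) ℂ) = diagonal (RCLike.ofReal ∘ μ) := by
    rw [hd_eq, hg_eq]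
    calc star u * (u * _ * star V) * V = (star u * u) * _ * (star V * V) := by noncomm_ring
      _ = _ := by rw [Unitary.star_mul_self_of_mem hu, Unitary.star_mul_self_of_mem hV,
          one_mul, mul_one]
  have hμ_one : ∀ i, μ i = 1 := fun i => by
    simpa [abs_of_pos (hμ i)] using norm_eq_one_of_coe_eq_diagonal hcompact hd hd_diag i
  have hD_one : diagonal (RCLike.ofReal ∘ μ : Fin n → ℂ) = 1 := by
    rw [← diagonal_one]
    exact congrArg diagonal (funext fun i => by simp [hμ_one])
  rw [hg_eq, hD_one, mul_one]
  exact mul_mem hu (Unitary.star_mem hV)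

/-- `U(n,ℂ)` is a maximal compact subgroup of `GL(n,ℂ)`: if `G` is a subgroup
of `GL(n,ℂ)` whose underlying set of matrices is compact (in the topology
induced from the space of `n × n` complex matrices) and `G` contains every
unitary matrix, then `G` consists exactly of the unitary matrices. -/
theorem unitaryGroup_maximal_compact (n : ℕ) (hn : 1 ≤ n)
    (G : Subgroup (GL (Fin n) ℂ))
    (hcompact : IsCompact
      ((fun g : GL (Fin n) ℂ => (g : Matrix (Fin n) (Fin n) ℂ)) '' (G : Set (GL (Fin n) ℂ))))
    (hunitary : ∀ g : GL (Fin n) ℂ,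
      (g : Matrix (Fin n) (Fin n) ℂ) ∈ Matrix.unitaryGroup (Fin n) ℂ → g ∈ G) :
    ∀ g : GL (Fin n) ℂ,
      g ∈ G ↔ (g : Matrix (Fin n) (Fin n) ℂ) ∈ Matrix.unitaryGroup (Fin n) ℂ :=
  unitaryGroup_maximal_compact_general n G hcompact hunitary
end

section
/- No nonconstant dimensionless function is a polynomial in the flavor invariants: let j, n ≥ 1 and let F : (Fin j → Matrix (Fin n) (Fin n) ℂ) → ℂ belong to the ℂ-subalgebra of the algebra of all functions (Fin j → Matrix (Fin n) (Fin n) ℂ) → ℂ generated by the word-trace functions x ↦ Tr(w₁ w₂ ⋯ w_s), where each w_t is either x_{i_t} or x_{i_t}ᴴ for some i_t ∈ Fin j and s ≥ 1. If F is scale-invariant, i.e. F (i ↦ c • (x i)) = F x for every nonzero complex number c and every tuple x, then F is a constant function. (In particular, a nonconstant dimensionless quantity such as the Jarlskog invariant cannot be expressed as a polynomial in the basic flavor invariants, which all carry positive mass dimension.) -/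
open Matrix

/-- No nonconstant dimensionless function is a polynomial in the flavor
invariants: if `F` lies in the ℂ-subalgebra of functions generated by the
word-trace functions `x ↦ Tr(w₁ ⋯ w_s)` (each `w_t` being `x_{i_t}` or
`x_{i_t}ᴴ`, `s ≥ 1`) and `F` is scale-invariant, then `F` is constant. -/
theorem scale_invariant_trace_polynomial_constant (j n : ℕ) (hj : 1 ≤ j) (hn : 1 ≤ n)
    (F : (Fin j → Matrix (Fin n) (Fin n) ℂ) → ℂ)
    (hF : F ∈ Algebra.adjoin ℂ
      {G : (Fin j → Matrix (Fin n) (Fin n) ℂ) → ℂ |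
        ∃ w : List (Fin j × Bool), w ≠ [] ∧
          G = fun x => Matrix.trace
            (w.map fun t => if t.2 then (x t.1)ᴴ else x t.1).prod})
    (hscale : ∀ c : ℂ, c ≠ 0 → ∀ x : Fin j → Matrix (Fin n) (Fin n) ℂ,
      F (fun i => c • x i) = F x) :
    ∃ d : ℂ, ∀ x : Fin j → Matrix (Fin n) (Fin n) ℂ, F x = d := by
  have hcont : Continuous F := by
    clear hscale
    induction hF using Algebra.adjoin_induction with
    | mem G hG =>
        obtain ⟨w, -, rfl⟩ := hG
        have hp : Continuous fun x : (Fin j → Matrix (Fin n) (Fin n) ℂ) =>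
            (w.map fun t => if t.2 then (x t.1)ᴴ else x t.1).prod := by
          induction w with
          | nil => simpa using continuous_const
          | cons a l ih =>
              simp only [List.map_cons, List.prod_cons]
              refine Continuous.matrix_mul ?_ ih
              rcases a with ⟨i, b⟩
              cases b
              · simpa using continuous_apply i
              · simpa using (continuous_apply i).matrix_conjTranspose
        exact hp.matrix_trace
    | algebraMap r => exact continuous_const
    | add _ _ _ _ h1 h2 => exact h1.add h2
    | mul _ _ _ _ h1 h2 => exact h1.mul h2
  refine ⟨F (fun _ => 0), fun x => ?_⟩
  have hg : Continuous fun c : ℂ => F (fun i => c • x i) :=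
    hcont.comp (continuous_pi fun i => continuous_id.smul continuous_const)
  have hd : Dense ({0}ᶜ : Set ℂ) := dense_compl_singleton 0
  have heq : (fun c : ℂ => F (fun i => c • x i)) = fun _ => F x :=
    Continuous.ext_on hd hg continuous_const (fun c hc => hscale c hc x)
  have h0 := congrFun heq 0
  simp only [zero_smul] at h0
  exact h0.symm
end

section
/- Invariance of Det(G^(1) + H_l H_ν) under flavor basis transformations: let n ≥ 1, let U, W ∈ U(n,ℂ) be unitary, and let M_l, M_ν be n×n complex matrices. Define H_l = M_l M_lᴴ, H_ν = M_ν M_νᴴ, G^(1) = M_ν (conj H_l) M_νᴴ, and define H_l', H_ν', G'^(1) by the same formulas from M_l' = U M_l Wᴴ and M_ν' = U M_ν Uᵀ. Then det(G'^(1) + H_l' H_ν') = det(G^(1) + H_l H_ν). -/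
open Matrix

/-!
A unitary change of flavor basis acts on `M_l` by `M_l ↦ U M_l Wᴴ` and on `M_ν` by
`M_ν ↦ U M_ν Vᴴ` with `V = conj U`, again unitary since `Uᵀ = (conj U)ᴴ`. Both `H_l`, `H_ν`
and, consequently, `conj H_l ↦ V (conj H_l) Vᴴ` and `G^(1)` transform by the single conjugation
`X ↦ U X Uᴴ`, which is multiplicative and additive; so `G^(1) + H_l H_ν` is conjugated by `U`
and its determinant does not change.
-/

namespace Matrix

theorem transpose_eq_conjTranspose_map_starRingEnd {m n R : Type*} [CommSemiring R] [StarRing R]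
    (U : Matrix m n R) : Uᵀ = (U.map (starRingEnd R))ᴴ := by
  ext; simp [starRingEnd_apply]

variable {l m n p q R : Type*} [Fintype m] [Fintype n] [Fintype p] [DecidableEq n]
  [CommRing R] [StarRing R]

theorem mul_conjTranspose_mul_mul_of_mem_unitaryGroup {V : Matrix n n R}
    (hV : V ∈ unitaryGroup n R) (U : Matrix l m R) (A : Matrix m n R) (B : Matrix n p R)
    (W : Matrix p q R) : U * A * Vᴴ * (V * B * W) = U * (A * B) * W := by
  have hVV : Vᴴ * V = 1 := mem_unitaryGroup_iff'.mp hV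
  simp only [Matrix.mul_assoc]
  rw [← Matrix.mul_assoc Vᴴ, hVV, Matrix.one_mul]

theorem mul_conjTranspose_of_mem_unitaryGroup {V : Matrix n n R}
    (hV : V ∈ unitaryGroup n R) (U : Matrix l m R) (A : Matrix m n R) (W : Matrix q p R)
    (B : Matrix p n R) : U * A * Vᴴ * (W * B * Vᴴ)ᴴ = U * (A * Bᴴ) * Wᴴ := by
  rw [conjTranspose_mul, conjTranspose_mul, conjTranspose_conjTranspose, ← Matrix.mul_assoc V,
    mul_conjTranspose_mul_mul_of_mem_unitaryGroup hV]

theorem det_conj_of_mem_unitaryGroup {U : Matrix n n R} (hU : U ∈ unitaryGroup n R)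
    (A : Matrix n n R) : det (U * A * Uᴴ) = det A :=
  det_conj_of_mul_eq_one (mem_unitaryGroup_iff.mp hU) (mem_unitaryGroup_iff'.mp hU)

end Matrix

theorem det_flavor_invariant_general (n : ℕ)
    (U W Ml Mν : Matrix (Fin n) (Fin n) ℂ)
    (hU : U ∈ Matrix.unitaryGroup (Fin n) ℂ)
    (hW : W ∈ Matrix.unitaryGroup (Fin n) ℂ)
    (Ml' Mν' : Matrix (Fin n) (Fin n) ℂ)
    (hMl' : Ml' = U * Ml * Wᴴ) (hMν' : Mν' = U * Mν * Uᵀ) :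
    det (Mν' * ((Ml' * Ml'ᴴ).map (starRingEnd ℂ)) * Mν'ᴴ +
          (Ml' * Ml'ᴴ) * (Mν' * Mν'ᴴ)) =
      det (Mν * ((Ml * Mlᴴ).map (starRingEnd ℂ)) * Mνᴴ +
          (Ml * Mlᴴ) * (Mν * Mνᴴ)) := by
  set V := U.map (starRingEnd ℂ)
  have hV : V ∈ unitaryGroup (Fin n) ℂ := map_star_mem_unitaryGroup_iff.mpr hU
  rw [transpose_eq_conjTranspose_map_starRingEnd] at hMν'
  have hHl : Ml' * Ml'ᴴ = U * (Ml * Mlᴴ) * Uᴴ := by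
    rw [hMl', mul_conjTranspose_of_mem_unitaryGroup hW]
  have hHν : Mν' * Mν'ᴴ = U * (Mν * Mνᴴ) * Uᴴ := by
    rw [hMν', mul_conjTranspose_of_mem_unitaryGroup hV]
  have hconjHl : (Ml' * Ml'ᴴ).map (starRingEnd ℂ) =
      V * (Ml * Mlᴴ).map (starRingEnd ℂ) * Vᴴ := by
    rw [hHl, Matrix.map_mul, Matrix.map_mul, conjTranspose_map (starRingEnd ℂ) fun _ => rfl]
  have hG : Mν' * (Ml' * Ml'ᴴ).map (starRingEnd ℂ) * Mν'ᴴ =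
      U * (Mν * (Ml * Mlᴴ).map (starRingEnd ℂ) * Mνᴴ) * Uᴴ := by
    rw [hconjHl, hMν', mul_conjTranspose_mul_mul_of_mem_unitaryGroup hV,
      mul_conjTranspose_of_mem_unitaryGroup hV]
  rw [hG, hHl, hHν, mul_conjTranspose_mul_mul_of_mem_unitaryGroup hU, ← Matrix.add_mul,
    ← Matrix.mul_add, det_conj_of_mem_unitaryGroup hU]

/-- Invariance of `Det(G^{(1)} + H_l H_ν)` under flavor basis transformations:
for `U, W` unitary and `M_l' = U M_l Wᴴ`, `M_ν' = U M_ν Uᵀ`, with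
`H_l = M_l M_lᴴ`, `H_ν = M_ν M_νᴴ`, `G^{(1)} = M_ν (conj H_l) M_νᴴ` (and the
primed quantities defined by the same formulas from the primed mass matrices),
one has `det(G'^{(1)} + H_l' H_ν') = det(G^{(1)} + H_l H_ν)`. -/
theorem det_flavor_invariant (n : ℕ) (hn : 1 ≤ n)
    (U W Ml Mν : Matrix (Fin n) (Fin n) ℂ)
    (hU : U ∈ Matrix.unitaryGroup (Fin n) ℂ)
    (hW : W ∈ Matrix.unitaryGroup (Fin n) ℂ)
    (Ml' Mν' : Matrix (Fin n) (Fin n) ℂ)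
    (hMl' : Ml' = U * Ml * Wᴴ) (hMν' : Mν' = U * Mν * Uᵀ) :
    det (Mν' * ((Ml' * Ml'ᴴ).map (starRingEnd ℂ)) * Mν'ᴴ +
          (Ml' * Ml'ᴴ) * (Mν' * Mν'ᴴ)) =
      det (Mν * ((Ml * Mlᴴ).map (starRingEnd ℂ)) * Mνᴴ +
          (Ml * Mlᴴ) * (Mν * Mνᴴ)) :=
  det_flavor_invariant_general n U W Ml Mν hU hW Ml' Mν' hMl' hMν'
end
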